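/- arXiv:2506.21421 — 2 statements merged into one kernel-verified Lean document; each statement's English description precedes it below -/
import Mathlib

section
/- Let $(X,\mu,T)$ be a probability measure-preserving system. The dominated ergodic theorem: for every $p>1$ and $f\in L^p(\mu)$, the maximal function $\mathbf{A}^* f := \sup_{k\in\mathbb{N}} \frac{1}{k}\sum_{j=0}^{k-1} |f|\circ T^j$ satisfies $\|\mathbf{A}^* f\|_p \le \frac{p}{p-1}\|f\|_p$. -/
open MeasureTheory Metric Filter Set ENNReal
noncomputable section

/-- The σ-algebra of T-invariant measurable sets. -/
def invSigma {X : Type*} [MeasurableSpace X] (T : X → X) : MeasurableSpace X where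
  MeasurableSet' s := MeasurableSet s ∧ T ⁻¹' s = s
  measurableSet_empty := ⟨MeasurableSet.empty, rfl⟩
  measurableSet_compl s hs := ⟨hs.1.compl, by rw [Set.preimage_compl, hs.2]⟩
  measurableSet_iUnion f hf := ⟨MeasurableSet.iUnion fun i => (hf i).1, by
    simp only [Set.preimage_iUnion]; exact Set.iUnion_congr fun i => (hf i).2⟩

/-!
Garsia's maximal ergodic lemma gives, for `g ≥ 0` and the truncated maximal function
`A_N g = max_{1 ≤ n ≤ N+1} (1/n) ∑_{j<n} g ∘ T^j`, the weak-type bound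
`t · μ {A_N g ≥ t} ≤ ∫_{A_N g ≥ t} g`. As in Doob's `L^p` inequality, the layer-cake formula
(applied to `μ` and to `g • μ`) and Hölder's inequality turn this into
`‖A_N g‖_p ≤ p/(p-1) ‖g‖_p`; monotone convergence in `N` removes the truncation.
-/

section MaximalLemma

variable {X : Type*}

def maxBirkhoffSum (T : X → X) (φ : X → ℝ) (N : ℕ) : X → ℝ :=
  (Finset.range (N + 1)).sup' Finset.nonempty_range_add_one fun n => birkhoffSum T φ (n + 1)

theorem maxBirkhoffSum_apply (T : X → X) (φ : X → ℝ) (N : ℕ) (x : X) :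
    maxBirkhoffSum T φ N x =
      (Finset.range (N + 1)).sup' Finset.nonempty_range_add_one
        fun n => birkhoffSum T φ (n + 1) x :=
  Finset.sup'_apply _ _ x

theorem maxBirkhoffSum_le_add_max_zero (T : X → X) (φ : X → ℝ) (N : ℕ) (x : X) :
    maxBirkhoffSum T φ N x ≤ φ x + max (maxBirkhoffSum T φ N (T x)) 0 := by
  obtain ⟨n, hn, hmax⟩ := Finset.exists_mem_eq_sup' Finset.nonempty_range_add_one
    fun n => birkhoffSum T φ (n + 1) x
  rw [maxBirkhoffSum_apply, hmax, birkhoffSum_succ']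
  gcongr
  cases n with
  | zero => simp [birkhoffSum_zero]
  | succ m =>
    rw [maxBirkhoffSum_apply]
    refine le_max_of_le_left (Finset.le_sup' (fun n => birkhoffSum T φ (n + 1) (T x)) ?_)
    simp only [Finset.mem_range] at hn ⊢
    omega

variable [MeasurableSpace X] {μ : Measure X} {T : X → X} {φ : X → ℝ}

theorem MeasureTheory.MeasurePreserving.integrable_birkhoffSum (hT : MeasurePreserving T μ μ)
    (hφ : Integrable φ μ) (n : ℕ) : Integrable (birkhoffSum T φ n) μ :=
  integrable_finsetSum _ fun j _ => (hT.iterate j).integrable_comp_of_integrable hφ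

theorem MeasureTheory.MeasurePreserving.integrable_maxBirkhoffSum (hT : MeasurePreserving T μ μ)
    (hφ : Integrable φ μ) (N : ℕ) : Integrable (maxBirkhoffSum T φ N) μ :=
  Finset.sup'_induction (p := fun f => Integrable f μ) _ _ (fun _ hf _ hg => hf.sup hg)
    fun n _ => hT.integrable_birkhoffSum hφ (n + 1)

/-- The maximal ergodic lemma, by Garsia's argument: with `M = maxBirkhoffSum T φ N`, the
function `max M 0 - max M 0 ∘ T`, whose integral vanishes, is at most `φ` on `{0 ≤ M}` and
nonpositive off it. -/
theorem MeasureTheory.MeasurePreserving.setIntegral_maxBirkhoffSum_nonneg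
    (hT : MeasurePreserving T μ μ) (hφ : Integrable φ μ) (N : ℕ) :
    0 ≤ ∫ x in {x | 0 ≤ maxBirkhoffSum T φ N x}, φ x ∂μ := by
  set M := maxBirkhoffSum T φ N
  set E := {x | 0 ≤ M x}
  have hM : Integrable M μ := hT.integrable_maxBirkhoffSum hφ N
  have hE : NullMeasurableSet E μ := nullMeasurableSet_le aemeasurable_const hM.aemeasurable
  set P : X → ℝ := fun x => max (M x) 0
  have hP : Integrable P μ := hM.sup (integrable_zero X ℝ μ)
  have hPT : Integrable (fun x => P (T x)) μ := hT.integrable_comp_of_integrable hP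
  have hPT_eq : ∫ x, P (T x) ∂μ = ∫ x, P x ∂μ := by
    have := integral_map hT.aemeasurable (hT.map_eq.symm ▸ hP.aestronglyMeasurable)
    rw [hT.map_eq] at this
    exact this.symm
  have hdiff : ∀ x, P x - P (T x) ≤ E.indicator φ x := by
    intro x
    by_cases hx : x ∈ E
    · have := maxBirkhoffSum_le_add_max_zero T φ N x
      simp only [indicator_of_mem hx, P, max_eq_left (show 0 ≤ M x from hx)]
      linarith
    · simp only [indicator_of_notMem hx, P, max_eq_right (not_le.1 (show ¬0 ≤ M x from hx)).le]
      linarith [le_max_right (M (T x)) 0]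
  calc 0 = ∫ x, P x - P (T x) ∂μ := by rw [integral_sub hP hPT, hPT_eq, sub_self]
    _ ≤ ∫ x, E.indicator φ x ∂μ := integral_mono (hP.sub hPT) (hφ.indicator₀ hE) hdiff
    _ = ∫ x in E, φ x ∂μ := integral_indicator₀ hE

end MaximalLemma

section MaximalAverage

variable {X : Type*}

def maxBirkhoffAverage (T : X → X) (g : X → ℝ) (N : ℕ) : X → ℝ :=
  (Finset.range (N + 1)).sup' Finset.nonempty_range_add_one
    fun n => birkhoffAverage ℝ T g (n + 1)

theorem maxBirkhoffAverage_apply (T : X → X) (g : X → ℝ) (N : ℕ) (x : X) :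
    maxBirkhoffAverage T g N x =
      (Finset.range (N + 1)).sup' Finset.nonempty_range_add_one
        fun n => birkhoffAverage ℝ T g (n + 1) x :=
  Finset.sup'_apply _ _ x

theorem le_maxBirkhoffAverage_iff (T : X → X) (g : X → ℝ) (N : ℕ) (t : ℝ) (x : X) :
    t ≤ maxBirkhoffAverage T g N x ↔ 0 ≤ maxBirkhoffSum T (fun y => g y - t) N x := by
  simp only [maxBirkhoffAverage_apply, maxBirkhoffSum_apply, Finset.le_sup'_iff]
  refine exists_congr fun n => and_congr_right fun _ => ?_
  have hsum : birkhoffSum T (fun y => g y - t) (n + 1) x =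
      birkhoffSum T g (n + 1) x - (n + 1) * t := by
    simp [birkhoffSum, Finset.sum_sub_distrib]
  rw [hsum, birkhoffAverage, smul_eq_mul, le_inv_mul_iff₀ (by positivity), sub_nonneg]
  push_cast
  rfl

theorem maxBirkhoffAverage_nonneg (T : X → X) {g : X → ℝ} (hg : 0 ≤ g) (N : ℕ) :
    0 ≤ maxBirkhoffAverage T g N := fun x =>
  (le_maxBirkhoffAverage_iff T g N 0 x).2 <| by
    simp only [sub_zero, maxBirkhoffSum_apply]
    exact (Finset.le_sup'_iff _).2 ⟨0, by simp, Finset.sum_nonneg fun j _ => hg _⟩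

theorem maxBirkhoffAverage_mono (T : X → X) (g : X → ℝ) (x : X) :
    Monotone fun N => maxBirkhoffAverage T g N x := fun N M hNM => by
  simp only [maxBirkhoffAverage_apply]
  exact Finset.sup'_mono _ (Finset.range_subset_range.2 (by omega)) _

theorem ofReal_birkhoffAverage (T : X → X) {g : X → ℝ} (hg : 0 ≤ g) (k : ℕ) (x : X) :
    ENNReal.ofReal (birkhoffAverage ℝ T g k x) =
      (k : ℝ≥0∞)⁻¹ * ∑ j ∈ Finset.range k, ENNReal.ofReal (g (T^[j] x)) := by
  rcases Nat.eq_zero_or_pos k with rfl | hk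
  · simp
  rw [birkhoffAverage, smul_eq_mul, ENNReal.ofReal_mul (by positivity),
    ENNReal.ofReal_inv_of_pos (by positivity), ENNReal.ofReal_natCast, birkhoffSum,
    ENNReal.ofReal_sum_of_nonneg fun j _ => hg _]

theorem iSup_ofReal_maxBirkhoffAverage (T : X → X) {g : X → ℝ} (hg : 0 ≤ g) (x : X) :
    ⨆ N, ENNReal.ofReal (maxBirkhoffAverage T g N x) =
      ⨆ k : ℕ, (k : ℝ≥0∞)⁻¹ * ∑ j ∈ Finset.range k, ENNReal.ofReal (g (T^[j] x)) := by
  simp_rw [← ofReal_birkhoffAverage T hg]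
  apply le_antisymm
  · refine iSup_le fun N => ?_
    obtain ⟨n, -, hmax⟩ := Finset.exists_mem_eq_sup' Finset.nonempty_range_add_one
      fun n => birkhoffAverage ℝ T g (n + 1) x
    rw [maxBirkhoffAverage_apply, hmax]
    exact le_iSup (fun k => ENNReal.ofReal (birkhoffAverage ℝ T g k x)) (n + 1)
  · refine iSup_le fun k => ?_
    cases k with
    | zero => simp
    | succ n =>
      refine le_iSup_of_le n (ENNReal.ofReal_le_ofReal ?_)
      rw [maxBirkhoffAverage_apply]
      exact Finset.le_sup' (fun n => birkhoffAverage ℝ T g (n + 1) x) (by simp)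

variable [MeasurableSpace X] {μ : Measure X} {T : X → X} {g : X → ℝ}

theorem measurable_maxBirkhoffAverage (hT : Measurable T) (hg : Measurable g) (N : ℕ) :
    Measurable (maxBirkhoffAverage T g N) :=
  Finset.measurable_sup' _ fun n _ =>
    (Finset.measurable_sum (Finset.range (n + 1)) fun j _ => hg.comp (hT.iterate j)).const_smul
      ((n + 1 : ℕ) : ℝ)⁻¹

theorem MeasureTheory.MeasurePreserving.memLp_maxBirkhoffAverage {p : ℝ≥0∞}
    (hT : MeasurePreserving T μ μ) (hg : MemLp g p μ) (N : ℕ) :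
    MemLp (maxBirkhoffAverage T g N) p μ :=
  Finset.sup'_induction (p := fun f => MemLp f p μ) _ _ (fun _ hf _ hg => hf.sup hg) fun n _ =>
    (memLp_finsetSum (Finset.range (n + 1)) fun j _ =>
      hg.comp_measurePreserving (hT.iterate j)).const_smul ((n + 1 : ℕ) : ℝ)⁻¹

theorem MeasureTheory.MeasurePreserving.mul_meas_le_maxBirkhoffAverage_le [IsFiniteMeasure μ]
    (hT : MeasurePreserving T μ μ) (hg0 : 0 ≤ g) (hg : Integrable g μ) (N : ℕ) (t : ℝ) :
    ENNReal.ofReal t * μ {x | t ≤ maxBirkhoffAverage T g N x} ≤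
      ∫⁻ x in {x | t ≤ maxBirkhoffAverage T g N x}, ENNReal.ofReal (g x) ∂μ := by
  obtain ht | ht := le_total t 0
  · simp [ENNReal.ofReal_of_nonpos ht]
  set E := {x | t ≤ maxBirkhoffAverage T g N x}
  have hgarsia :=
    hT.setIntegral_maxBirkhoffSum_nonneg (φ := fun y => g y - t) (hg.sub (integrable_const t)) N
  simp only [← le_maxBirkhoffAverage_iff] at hgarsia
  rw [integral_sub hg.integrableOn (integrable_const t).integrableOn, setIntegral_const,
    smul_eq_mul, sub_nonneg] at hgarsia
  calc ENNReal.ofReal t * μ E = ENNReal.ofReal (μ.real E * t) := by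
        rw [mul_comm, ENNReal.ofReal_mul measureReal_nonneg, measureReal_def,
          ENNReal.ofReal_toReal (measure_ne_top μ E)]
    _ ≤ ENNReal.ofReal (∫ x in E, g x ∂μ) := ENNReal.ofReal_le_ofReal hgarsia
    _ = ∫⁻ x in E, ENNReal.ofReal (g x) ∂μ :=
        ofReal_integral_eq_lintegral_ofReal hg.integrableOn (ae_of_all _ hg0)

end MaximalAverage

theorem ENNReal.rpow_one_div_le_of_le_mul_rpow {a b : ℝ≥0∞} {p q : ℝ}
    (hpq : p.HolderConjugate q) (ha : a ≠ ∞) (h : a ≤ b * a ^ (1 / q)) : a ^ (1 / p) ≤ b := by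
  rcases eq_or_ne a 0 with rfl | ha0
  · rw [ENNReal.zero_rpow_of_pos (one_div_pos.2 hpq.pos)]
    exact zero_le
  have hq0 : a ^ (1 / q) ≠ 0 := by simp [ENNReal.rpow_eq_zero_iff, ha0, ha]
  have hqtop : a ^ (1 / q) ≠ ∞ :=
    ENNReal.rpow_ne_top_of_nonneg (one_div_pos.2 hpq.symm.pos).le ha
  refine (ENNReal.mul_le_mul_iff_left hq0 hqtop).1 ?_
  rwa [← ENNReal.rpow_add _ _ ha0 ha, hpq.one_div_add_one_div, one_div_one, ENNReal.rpow_one]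

section WeakType

variable {X : Type*} [MeasurableSpace X] {μ : Measure X} {R : X → ℝ} {G : X → ℝ≥0∞} {p : ℝ}

/-- Both sides are layer-cake integrals, the right one for the measure `G • μ`. -/
theorem lintegral_rpow_le_mul_lintegral_mul_rpow_sub_one (hR0 : 0 ≤ R) (hRm : Measurable R)
    (hGm : Measurable G) (hp : 1 < p)
    (hweak : ∀ t > 0, ENNReal.ofReal t * μ {x | t ≤ R x} ≤ ∫⁻ x in {x | t ≤ R x}, G x ∂μ) :
    ∫⁻ x, ENNReal.ofReal (R x ^ p) ∂μ ≤
      ENNReal.ofReal (p / (p - 1)) * ∫⁻ x, G x * ENNReal.ofReal (R x ^ (p - 1)) ∂μ := by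
  set ν := μ.withDensity G
  have hp1 : 0 < p - 1 := by linarith
  have hlevel : ∀ t ∈ Ioi (0 : ℝ), μ {x | t ≤ R x} * ENNReal.ofReal (t ^ (p - 1)) ≤
      ν {x | t ≤ R x} * ENNReal.ofReal (t ^ (p - 1 - 1)) := by
    intro t (ht : 0 < t)
    rw [withDensity_apply _ (measurableSet_le measurable_const hRm),
      show t ^ (p - 1) = t * t ^ (p - 1 - 1) by
        rw [mul_comm, ← Real.rpow_add_one ht.ne', sub_add_cancel],
      ENNReal.ofReal_mul ht.le, ← mul_assoc, mul_comm (μ _)]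
    gcongr
    exact hweak t ht
  calc ∫⁻ x, ENNReal.ofReal (R x ^ p) ∂μ
      = ENNReal.ofReal p * ∫⁻ t in Ioi 0, μ {x | t ≤ R x} * ENNReal.ofReal (t ^ (p - 1)) :=
        lintegral_rpow_eq_lintegral_meas_le_mul μ (ae_of_all _ hR0) hRm.aemeasurable (by linarith)
    _ ≤ ENNReal.ofReal (p / (p - 1)) * (ENNReal.ofReal (p - 1) *
          ∫⁻ t in Ioi 0, ν {x | t ≤ R x} * ENNReal.ofReal (t ^ (p - 1 - 1))) := by
        rw [← mul_assoc, ← ENNReal.ofReal_mul (by positivity), div_mul_cancel₀ _ hp1.ne']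
        exact mul_le_mul_right (setLIntegral_mono' measurableSet_Ioi hlevel) _
    _ = ENNReal.ofReal (p / (p - 1)) * ∫⁻ x, G x * ENNReal.ofReal (R x ^ (p - 1)) ∂μ := by
        rw [← lintegral_rpow_eq_lintegral_meas_le_mul ν (ae_of_all _ hR0) hRm.aemeasurable hp1,
          lintegral_withDensity_eq_lintegral_mul _ hGm (hRm.pow_const _).ennreal_ofReal]
        rfl

theorem lintegral_rpow_one_div_le_of_mul_meas_le (hR0 : 0 ≤ R) (hRm : Measurable R)
    (hR : MemLp R (ENNReal.ofReal p) μ) (hGm : Measurable G) (hp : 1 < p)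
    (hweak : ∀ t > 0, ENNReal.ofReal t * μ {x | t ≤ R x} ≤ ∫⁻ x in {x | t ≤ R x}, G x ∂μ) :
    (∫⁻ x, ENNReal.ofReal (R x) ^ p ∂μ) ^ (1 / p) ≤
      ENNReal.ofReal (p / (p - 1)) * (∫⁻ x, G x ^ p ∂μ) ^ (1 / p) := by
  have hpq : p.HolderConjugate (p / (p - 1)) := .conjExponent hp
  have hpow : ∀ x, ∀ s : ℝ, 0 ≤ s → ENNReal.ofReal (R x) ^ s = ENNReal.ofReal (R x ^ s) :=
    fun x s hs => ENNReal.ofReal_rpow_of_nonneg (hR0 x) hs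
  have hfin : ∫⁻ x, ENNReal.ofReal (R x) ^ p ∂μ ≠ ∞ := by
    have := lintegral_rpow_enorm_lt_top_of_eLpNorm_lt_top (by simpa using hpq.pos)
      ENNReal.ofReal_ne_top hR.eLpNorm_lt_top
    simpa [Real.enorm_eq_ofReal (hR0 _), ENNReal.toReal_ofReal hpq.nonneg] using this.ne
  refine ENNReal.rpow_one_div_le_of_le_mul_rpow hpq hfin ?_
  have hholder := ENNReal.lintegral_mul_le_Lp_mul_Lq μ hpq hGm.aemeasurable
    (hRm.ennreal_ofReal.pow_const (p - 1)).aemeasurable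
  simp only [Pi.mul_apply, ← ENNReal.rpow_mul, hpq.sub_one_mul_conj] at hholder
  calc ∫⁻ x, ENNReal.ofReal (R x) ^ p ∂μ
      ≤ ENNReal.ofReal (p / (p - 1)) * ∫⁻ x, G x * ENNReal.ofReal (R x) ^ (p - 1) ∂μ := by
        simp only [hpow _ _ hpq.nonneg, hpow _ _ hpq.sub_one_pos.le]
        exact lintegral_rpow_le_mul_lintegral_mul_rpow_sub_one hR0 hRm hGm hp hweak
    _ ≤ _ := by rw [mul_assoc]; gcongr

end WeakType

section Dominated

variable {X : Type*} [MeasurableSpace X] {μ : Measure X} [IsFiniteMeasure μ] {T : X → X}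
  {g : X → ℝ} {p : ℝ}

theorem MeasureTheory.MeasurePreserving.lintegral_maxBirkhoffAverage_rpow_le
    (hT : MeasurePreserving T μ μ) (hg0 : 0 ≤ g) (hgm : Measurable g) (hp : 1 < p)
    (hg : MemLp g (ENNReal.ofReal p) μ) (N : ℕ) :
    (∫⁻ x, ENNReal.ofReal (maxBirkhoffAverage T g N x) ^ p ∂μ) ^ (1 / p) ≤
      ENNReal.ofReal (p / (p - 1)) * (∫⁻ x, ENNReal.ofReal (g x) ^ p ∂μ) ^ (1 / p) :=
  lintegral_rpow_one_div_le_of_mul_meas_le (maxBirkhoffAverage_nonneg T hg0 N)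
    (measurable_maxBirkhoffAverage hT.measurable hgm N) (hT.memLp_maxBirkhoffAverage hg N)
    hgm.ennreal_ofReal hp fun t _ => hT.mul_meas_le_maxBirkhoffAverage_le hg0
      (hg.integrable (ENNReal.one_le_ofReal.2 hp.le)) N t

theorem MeasureTheory.MeasurePreserving.lintegral_iSup_maxBirkhoffAverage_rpow_le
    (hT : MeasurePreserving T μ μ) (hg0 : 0 ≤ g) (hgm : Measurable g) (hp : 1 < p)
    (hg : MemLp g (ENNReal.ofReal p) μ) :
    (∫⁻ x, (⨆ N, ENNReal.ofReal (maxBirkhoffAverage T g N x)) ^ p ∂μ) ^ (1 / p) ≤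
      ENNReal.ofReal (p / (p - 1)) * (∫⁻ x, ENNReal.ofReal (g x) ^ p ∂μ) ^ (1 / p) := by
  have hp0 : 0 < p := by linarith
  have hmeas : ∀ N, Measurable fun x => ENNReal.ofReal (maxBirkhoffAverage T g N x) ^ p :=
    fun N => (measurable_maxBirkhoffAverage hT.measurable hgm N).ennreal_ofReal.pow_const p
  have hmono : Monotone fun N x => ENNReal.ofReal (maxBirkhoffAverage T g N x) ^ p :=
    fun N M hNM x => ENNReal.rpow_le_rpow
      (ENNReal.ofReal_le_ofReal (maxBirkhoffAverage_mono T g x hNM)) hp0.le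
  have hrpow : ∀ x, (⨆ N, ENNReal.ofReal (maxBirkhoffAverage T g N x)) ^ p =
      ⨆ N, ENNReal.ofReal (maxBirkhoffAverage T g N x) ^ p :=
    fun x => (ENNReal.orderIsoRpow p hp0).map_iSup _
  simp_rw [hrpow]
  rw [lintegral_iSup hmeas hmono]
  exact ((ENNReal.orderIsoRpow (1 / p) (by positivity)).map_iSup _).trans_le
    (iSup_le fun N => hT.lintegral_maxBirkhoffAverage_rpow_le hg0 hgm hp hg N)

end Dominated

theorem stmt4 {X : Type*} [MeasurableSpace X] (μ : Measure X) [IsProbabilityMeasure μ]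
    (T : X → X) (hT : MeasurePreserving T μ μ)
    (p : ℝ) (hp : 1 < p) (f : X → ℝ) (hf : MemLp f (ENNReal.ofReal p) μ) :
    (∫⁻ x, (⨆ k : ℕ,
        (k : ℝ≥0∞)⁻¹ * ∑ j ∈ Finset.range k, (‖f (T^[j] x)‖₊ : ℝ≥0∞)) ^ p ∂μ) ^ (1 / p)
      ≤ ENNReal.ofReal (p / (p - 1)) * (∫⁻ x, (‖f x‖₊ : ℝ≥0∞) ^ p ∂μ) ^ (1 / p) := by
  set g : X → ℝ := fun x => ‖hf.1.mk f x‖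
  have hg0 : 0 ≤ g := fun x => norm_nonneg _
  have horbit : ∀ᵐ x ∂μ, ∀ j : ℕ, (‖f (T^[j] x)‖₊ : ℝ≥0∞) = ENNReal.ofReal (g (T^[j] x)) := by
    refine ae_all_iff.2 fun j => ?_
    filter_upwards [(hT.iterate j).quasiMeasurePreserving.ae_eq_comp hf.1.ae_eq_mk] with x hx
    rw [Function.comp_apply, Function.comp_apply] at hx
    rw [hx, ofReal_norm, enorm_eq_nnnorm]
  calc _ = (∫⁻ x, (⨆ N, ENNReal.ofReal (maxBirkhoffAverage T g N x)) ^ p ∂μ) ^ (1 / p) := by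
        refine congrArg (· ^ (1 / p)) (lintegral_congr_ae ?_)
        filter_upwards [horbit] with x hx
        simp only [hx, iSup_ofReal_maxBirkhoffAverage T hg0]
    _ ≤ ENNReal.ofReal (p / (p - 1)) * (∫⁻ x, ENNReal.ofReal (g x) ^ p ∂μ) ^ (1 / p) :=
        hT.lintegral_iSup_maxBirkhoffAverage_rpow_le hg0
          hf.1.stronglyMeasurable_mk.measurable.norm hp (hf.ae_eq hf.1.ae_eq_mk).norm
    _ = _ := by
        refine congrArg (_ * · ^ (1 / p)) (lintegral_congr_ae ?_)
        filter_upwards [horbit] with x hx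
        simpa using congrArg (· ^ p) (hx 0).symm
end
end

section
/- Let $X$ be a metric space and $\mu$ a Borel probability measure with the Hardy–Littlewood property, and let $T$ be $\mu$-preserving. Suppose $h\in L^\infty(\mu)$ with $\|h\|_\infty\le 1$ is such that $\mathbb{B}_k h := \frac{1}{k}\sum_{j=0}^{k-1} h\circ T^{j^2} \to 0$ almost surely as $k\to\infty$. Then $V_{r,k}h(x) := \mu(B(x,r))^{-1}\int_{B(x,r)}\mathbb{B}_k h\,d\mu \to 0$ for a.e. $x$ as $r\searrow 0$, $k\to\infty$ jointly. -/
open MeasureTheory Metric Filter Set ENNReal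
noncomputable section

/-- The (centered) Hardy–Littlewood property: the centered maximal operator is of
weak type (1,1). -/
def HLProp {X : Type*} [PseudoMetricSpace X] [MeasurableSpace X] (μ : Measure X) : Prop :=
  ∃ C : ℝ≥0∞, 1 ≤ C ∧ ∀ f : X → ℝ, Integrable f μ → ∀ ε : ℝ≥0∞, 0 < ε →
    μ {x | ε ≤ ⨆ (r : ℝ) (_ : 0 < r),
        (μ (ball x r))⁻¹ * ∫⁻ y in ball x r, ‖f y‖₊ ∂μ}
      ≤ C / ε * ∫⁻ y, ‖f y‖₊ ∂μ

/-!
Of the Hardy–Littlewood property only its qualitative consequence is used: the maximal function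
of an integrable function is finite almost everywhere (this survives `C = ∞`). By Egorov's theorem
the averages `𝔹ₖ h` tend to `0` uniformly off sets `Sₘ` with `μ Sₘ ≤ 4⁻ᵐ`. The maximal function of
`∑ₘ 2ᵐ 𝟙_{Sₘ}` is finite at almost every `x`, and there the ball averages of `𝟙_{Sₘ}` are at most
`2⁻ᵐ` times it, for every radius at once. As `|𝔹ₖ h| ≤ 1`, the ball average of `𝔹ₖ h` is at most the
ball average of `𝟙_{Sₘ}` plus `sup_{Sₘᶜ} |𝔹ₖ h|`.
-/

theorem abs_card_inv_mul_sum_le {ι : Type*} (s : Finset ι) {a : ι → ℝ} {c : ℝ} (hc : 0 ≤ c)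
    (ha : ∀ j ∈ s, |a j| ≤ c) : |(s.card : ℝ)⁻¹ * ∑ j ∈ s, a j| ≤ c := by
  rcases s.eq_empty_or_nonempty with rfl | hs
  · simpa using hc
  rw [abs_mul, abs_inv, Nat.abs_cast, inv_mul_le_iff₀ (by positivity)]
  calc |∑ j ∈ s, a j| ≤ ∑ j ∈ s, |a j| := Finset.abs_sum_le_sum_abs _ _
    _ ≤ s.card * c := by simpa using Finset.sum_le_card_nsmul s _ c ha

section MaximalFunction

variable {X : Type*} [PseudoMetricSpace X] [MeasurableSpace X] {μ : Measure X}

def maximalFunction (μ : Measure X) (g : X → ℝ≥0∞) (x : X) : ℝ≥0∞ :=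
  ⨆ (r : ℝ) (_ : 0 < r), (μ (ball x r))⁻¹ * ∫⁻ y in ball x r, g y ∂μ

theorem ball_laverage_le_maximalFunction (g : X → ℝ≥0∞) {x : X} {r : ℝ} (hr : 0 < r) :
    (μ (ball x r))⁻¹ * ∫⁻ y in ball x r, g y ∂μ ≤ maximalFunction μ g x :=
  le_iSup₂ (f := fun r (_ : 0 < r) => (μ (ball x r))⁻¹ * ∫⁻ y in ball x r, g y ∂μ) r hr

theorem maximalFunction_congr_ae {g g' : X → ℝ≥0∞} (h : g =ᵐ[μ] g') :
    maximalFunction μ g = maximalFunction μ g' := by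
  ext x
  simp only [maximalFunction, lintegral_congr_ae (ae_restrict_of_ae h)]

theorem maximalFunction_mono {g g' : X → ℝ≥0∞} (h : g ≤ g') :
    maximalFunction μ g ≤ maximalFunction μ g' := fun _ =>
  iSup₂_mono fun _ _ => by gcongr; exact h _

theorem maximalFunction_const_mul (c : ℝ≥0∞) {g : X → ℝ≥0∞} (hg : Measurable g) (x : X) :
    maximalFunction μ (fun y => c * g y) x = c * maximalFunction μ g x := by
  simp only [maximalFunction, lintegral_const_mul c hg, ENNReal.mul_iSup, mul_left_comm]

theorem measure_inter_ball_le_maximalFunction_indicator {S : Set X} (hS : MeasurableSet S)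
    {x : X} {r : ℝ} (hr : 0 < r) :
    (μ (ball x r))⁻¹ * μ (S ∩ ball x r) ≤ maximalFunction μ (S.indicator 1) x := by
  simpa only [lintegral_indicator_one hS, Measure.restrict_apply hS] using
    ball_laverage_le_maximalFunction (μ := μ) (S.indicator 1) hr

theorem HLProp.ae_maximalFunction_lt_top (hHL : HLProp μ) {g : X → ℝ≥0∞}
    (hg : AEMeasurable g μ) (hgi : ∫⁻ y, g y ∂μ ≠ ⊤) :
    ∀ᵐ x ∂μ, maximalFunction μ g x < ⊤ := by
  obtain ⟨C, -, hC⟩ := hHL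
  have hnorm : (fun y => (‖(g y).toReal‖₊ : ℝ≥0∞)) =ᵐ[μ] g := by
    filter_upwards [ae_lt_top' hg hgi] with y hy
    rw [← enorm_eq_nnnorm, Real.enorm_toReal hy.ne]
  -- at `ε = ⊤` the weak-type bound reads `C / ⊤ * ‖f‖₁ = 0`, whatever `C` is
  have hnull : μ {x | ⊤ ≤ maximalFunction μ (fun y => ‖(g y).toReal‖₊) x} ≤ 0 := by
    refine (hC _ (integrable_toReal_of_lintegral_ne_top hg hgi) ⊤ zero_lt_top).trans ?_
    rw [div_top, zero_mul]
  rw [maximalFunction_congr_ae hnorm, nonpos_iff_eq_zero, measure_eq_zero_iff_ae_notMem] at hnull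
  filter_upwards [hnull] with x hx
  exact not_le.1 hx

theorem HLProp.ae_tendsto_maximalFunction_indicator (hHL : HLProp μ) {S : ℕ → Set X}
    (hS : ∀ m, MeasurableSet (S m)) {w : ℕ → ℝ≥0∞} (hw : Tendsto w atTop (nhds ⊤))
    (hsum : ∑' m, w m * μ (S m) ≠ ⊤) :
    ∀ᵐ x ∂μ, Tendsto (fun m => maximalFunction μ ((S m).indicator 1) x) atTop (nhds 0) := by
  set H : X → ℝ≥0∞ := fun y => ∑' m, w m * (S m).indicator 1 y
  have hind : ∀ m, Measurable ((S m).indicator (1 : X → ℝ≥0∞)) :=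
    fun m => measurable_one.indicator (hS m)
  have hH : ∫⁻ y, H y ∂μ = ∑' m, w m * μ (S m) := by
    simp only [H, lintegral_tsum fun m => ((hind m).const_mul _).aemeasurable,
      lintegral_const_mul _ (hind _), lintegral_indicator_one (hS _)]
  filter_upwards [hHL.ae_maximalFunction_lt_top
    (Measurable.tsum fun m => (hind m).const_mul _).aemeasurable (hH ▸ hsum)] with x hx
  have hbound : ∀ m, w m ≠ 0 →
      maximalFunction μ ((S m).indicator 1) x ≤ maximalFunction μ H x / w m := by
    intro m hm
    rw [ENNReal.le_div_iff_mul_le (Or.inl hm) (Or.inr hx.ne), mul_comm,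
      ← maximalFunction_const_mul _ (hind m)]
    exact maximalFunction_mono
      (fun y => ENNReal.le_tsum (f := fun m => w m * (S m).indicator 1 y) m) x
  have hlim : Tendsto (fun m => maximalFunction μ H x / w m) atTop (nhds 0) := by
    simpa only [ENNReal.div_top] using ENNReal.Tendsto.const_div hw (Or.inr hx.ne)
  exact tendsto_of_tendsto_of_tendsto_of_le_of_le' tendsto_const_nhds hlim
    (Eventually.of_forall fun _ => zero_le) ((hw.eventually_ne ENNReal.top_ne_zero).mono hbound)

theorem abs_ball_average_lt [IsFiniteMeasure μ] {b : X → ℝ} {S : Set X} (hS : MeasurableSet S)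
    {δ ε : ℝ} (hδ : 0 ≤ δ) (hb : ∀ᵐ y ∂μ, |b y| ≤ 1) (hbS : ∀ᵐ y ∂μ, y ∉ S → |b y| ≤ δ) {x : X}
    (hx : maximalFunction μ (S.indicator 1) x < ENNReal.ofReal ε) {r : ℝ} (hr : 0 < r) :
    |(μ (ball x r)).toReal⁻¹ * ∫ y in ball x r, b y ∂μ| < ε + δ := by
  set A := ball x r
  have hdom : ∀ᵐ y ∂μ.restrict A, |b y| ≤ S.indicator 1 y + δ := by
    refine ae_restrict_of_ae ?_
    filter_upwards [hb, hbS] with y hy1 hyS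
    by_cases hy : y ∈ S
    · simpa [hy] using hy1.trans (le_add_of_nonneg_right hδ)
    · simpa [hy] using hyS hy
  have hind : Integrable (S.indicator (1 : X → ℝ)) (μ.restrict A) :=
    (integrable_const 1).indicator hS
  have hint : |∫ y in A, b y ∂μ| ≤ μ.real (S ∩ A) + δ * (μ A).toReal := by
    calc |∫ y in A, b y ∂μ| ≤ ∫ y in A, |b y| ∂μ := abs_integral_le_integral_abs
      _ ≤ ∫ y in A, (S.indicator 1 y + δ) ∂μ :=
        integral_mono_of_nonneg (Eventually.of_forall fun _ => abs_nonneg _)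
          (hind.add (integrable_const δ)) hdom
      _ = μ.real (S ∩ A) + δ * (μ A).toReal := by
        rw [integral_add hind (integrable_const δ),
          integral_indicator_one hS, integral_const, measureReal_restrict_apply hS,
          measureReal_restrict_apply_univ, smul_eq_mul, mul_comm, measureReal_def μ A]
  have hratio : (μ A).toReal⁻¹ * μ.real (S ∩ A) < ε := by
    have := (measure_inter_ball_le_maximalFunction_indicator hS hr).trans_lt hx
    rw [measureReal_def, ← ENNReal.toReal_inv, ← ENNReal.toReal_mul]
    exact ENNReal.toReal_lt_of_lt_ofReal this
  have hcancel : (μ A).toReal⁻¹ * (μ A).toReal ≤ 1 := inv_mul_le_one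
  calc |(μ A).toReal⁻¹ * ∫ y in A, b y ∂μ| = (μ A).toReal⁻¹ * |∫ y in A, b y ∂μ| := by
        rw [abs_mul, abs_of_nonneg (by positivity)]
    _ ≤ (μ A).toReal⁻¹ * (μ.real (S ∩ A) + δ * (μ A).toReal) := by gcongr
    _ = (μ A).toReal⁻¹ * μ.real (S ∩ A) + δ * ((μ A).toReal⁻¹ * (μ A).toReal) := by ring
    _ < ε + δ := add_lt_add_of_lt_of_le hratio (mul_le_of_le_one_right hδ hcancel)

theorem HLProp.ae_tendstoUniformlyOn_ball_average [IsFiniteMeasure μ] (hHL : HLProp μ)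
    {b : ℕ → X → ℝ} (hb : ∀ k, AEStronglyMeasurable (b k) μ) (hb1 : ∀ k, ∀ᵐ y ∂μ, |b k y| ≤ 1)
    (hb0 : ∀ᵐ y ∂μ, Tendsto (fun k => b k y) atTop (nhds 0)) :
    ∀ᵐ x ∂μ, TendstoUniformlyOn
      (fun k r => (μ (ball x r)).toReal⁻¹ * ∫ y in ball x r, b k y ∂μ) 0 atTop (Ioi 0) := by
  set b' : ℕ → X → ℝ := fun k => (hb k).mk
  have hbb' : ∀ᵐ y ∂μ, ∀ k, b k y = b' k y := ae_all_iff.2 fun k => (hb k).ae_eq_mk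
  have hegorov : ∀ m : ℕ, ∃ S, MeasurableSet S ∧ μ S ≤ ENNReal.ofReal (4⁻¹ ^ m) ∧
      TendstoUniformlyOn b' 0 atTop Sᶜ := fun m =>
    tendstoUniformlyOn_of_ae_tendsto' (fun k => (hb k).stronglyMeasurable_mk)
      stronglyMeasurable_const
      (by filter_upwards [hb0, hbb'] with y hy hy' using hy.congr fun k => hy' k) (by positivity)
  choose S hS hμS hunif using hegorov
  have hsum : ∑' m, 2 ^ m * μ (S m) ≠ ⊤ := by
    have hgeom : ∀ m : ℕ, (2 : ℝ≥0∞) ^ m * ENNReal.ofReal (4⁻¹ ^ m) = 2⁻¹ ^ m := fun m => by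
      rw [ENNReal.ofReal_pow (by norm_num), ENNReal.ofReal_inv_of_pos (by norm_num),
        ENNReal.ofReal_ofNat, ← mul_pow, show (4 : ℝ≥0∞) = 2 * 2 by norm_num,
        ENNReal.mul_inv (by simp) (by simp), ← mul_assoc,
        ENNReal.mul_inv_cancel (by simp) (by simp), one_mul]
    refine ne_top_of_le_ne_top (b := 2) ENNReal.ofNat_ne_top ?_
    calc ∑' m, 2 ^ m * μ (S m) ≤ ∑' m : ℕ, (2⁻¹ : ℝ≥0∞) ^ m :=
          ENNReal.tsum_le_tsum fun m => hgeom m ▸ mul_le_mul_right (hμS m) _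
      _ = 2 := by rw [ENNReal.tsum_geometric, ENNReal.one_sub_inv_two, inv_inv]
  filter_upwards [hHL.ae_tendsto_maximalFunction_indicator hS
    (ENNReal.tendsto_pow_atTop_nhds_top_iff.2 one_lt_two) hsum] with x hx
  rw [Metric.tendstoUniformlyOn_iff]
  intro ε hε
  obtain ⟨m, hm⟩ := (hx.eventually_lt_const (ENNReal.ofReal_pos.2 (half_pos hε))).exists
  filter_upwards [Metric.tendstoUniformlyOn_iff.1 (hunif m) (ε / 2) (half_pos hε)] with k hk r hr
  have hbS : ∀ᵐ y ∂μ, y ∉ S m → |b k y| ≤ ε / 2 := by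
    filter_upwards [hbb'] with y hy hyS
    simpa [hy k, dist_comm, Real.dist_eq] using (hk y hyS).le
  simpa [Real.dist_eq, add_halves] using
    abs_ball_average_lt (hS m) (half_pos hε).le (hb1 k) hbS hm hr

end MaximalFunction

theorem stmt14_general {X : Type*} [MetricSpace X] [MeasurableSpace X]
    (μ : Measure X) [IsProbabilityMeasure μ] (hHL : HLProp μ)
    (T : X → X) (hT : MeasurePreserving T μ μ)
    (f : X → ℝ) (hf : MemLp f ⊤ μ) (hf1 : eLpNorm f ⊤ μ ≤ 1)
    (hconv : ∀ᵐ x ∂μ,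
      Tendsto (fun k : ℕ => (k:ℝ)⁻¹ * ∑ j ∈ Finset.range k, f (T^[j ^ 2] x))
        atTop (nhds 0)) :
    ∀ᵐ x ∂μ, ∀ ε > (0:ℝ), ∃ r₀ > (0:ℝ), ∃ K : ℕ, ∀ r, 0 < r → r < r₀ → ∀ k ≥ K,
      |(μ (ball x r)).toReal⁻¹ *
          ∫ y in ball x r, (k:ℝ)⁻¹ * ∑ j ∈ Finset.range k, f (T^[j ^ 2] y) ∂μ| < ε := by
  have hf_le : ∀ᵐ y ∂μ, |f y| ≤ 1 := by
    filter_upwards [ae_le_eLpNormEssSup (f := f) (μ := μ)] with y hy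
    rw [← eLpNorm_exponent_top] at hy
    simpa [Real.enorm_eq_ofReal_abs] using hy.trans hf1
  have hB : ∀ k : ℕ, AEStronglyMeasurable
      (fun y => (k:ℝ)⁻¹ * ∑ j ∈ Finset.range k, f (T^[j ^ 2] y)) μ := fun k =>
    aestronglyMeasurable_const.mul
      (Finset.aestronglyMeasurable_fun_sum _ fun j _ => hf.1.comp_measurePreserving (hT.iterate _))
  have hB1 : ∀ k : ℕ, ∀ᵐ y ∂μ, |(k:ℝ)⁻¹ * ∑ j ∈ Finset.range k, f (T^[j ^ 2] y)| ≤ 1 := by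
    intro k
    filter_upwards [ae_all_iff.2 fun n => (hT.iterate n).quasiMeasurePreserving.ae hf_le] with y hy
    simpa using abs_card_inv_mul_sum_le (Finset.range k) zero_le_one fun j _ => hy (j ^ 2)
  filter_upwards [hHL.ae_tendstoUniformlyOn_ball_average hB hB1 hconv] with x hx ε hε
  obtain ⟨K, hK⟩ := eventually_atTop.1 (Metric.tendstoUniformlyOn_iff.1 hx ε hε)
  exact ⟨1, one_pos, K, fun r hr _ k hk => by simpa [Real.dist_eq] using hK k hk r hr⟩

theorem stmt14 {X : Type*} [MetricSpace X] [MeasurableSpace X] [BorelSpace X]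
    (μ : Measure X) [IsProbabilityMeasure μ] (hHL : HLProp μ)
    (hball : ∀ (x : X) (r : ℝ), 0 < r → 0 < μ (ball x r))
    (T : X → X) (hT : MeasurePreserving T μ μ)
    (f : X → ℝ) (hf : MemLp f ⊤ μ) (hf1 : eLpNorm f ⊤ μ ≤ 1)
    (hconv : ∀ᵐ x ∂μ,
      Tendsto (fun k : ℕ => (k:ℝ)⁻¹ * ∑ j ∈ Finset.range k, f (T^[j ^ 2] x))
        atTop (nhds 0)) :
    ∀ᵐ x ∂μ, ∀ ε > (0:ℝ), ∃ r₀ > (0:ℝ), ∃ K : ℕ, ∀ r, 0 < r → r < r₀ → ∀ k ≥ K,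
      |(μ (ball x r)).toReal⁻¹ *
          ∫ y in ball x r, (k:ℝ)⁻¹ * ∑ j ∈ Finset.range k, f (T^[j ^ 2] y) ∂μ| < ε :=
  stmt14_general μ hHL T hT f hf hf1 hconv
end
end
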